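/- Let N = e·m where e = 2^f with f ≥ 1 and m is an odd integer with m > 1. Let c, d be integers with c ≡ 0 (mod e), c ≡ 1 (mod m), d ≡ 1 (mod e), d ≡ 0 (mod m), and set a = L^c and r = R^d in SL(2,ℤ). Then the commutator a⁻¹·r⁻¹·a·r lies in Γ(N). -/

import Mathlib

open Matrix CongruenceSubgroup

local notation "SL2Z" => Matrix.SpecialLinearGroup (Fin 2) ℤ

/-- The matrix `L = [[1,0],[1,1]]` as an element of `SL(2, ℤ)`. -/
def L : SL2Z := ⟨!![1, 0; 1, 1], by norm_num [Matrix.det_fin_two_of]⟩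

/-- The matrix `R = [[1,1],[0,1]]` as an element of `SL(2, ℤ)`. -/
def R : SL2Z := ⟨!![1, 1; 0, 1], by norm_num [Matrix.det_fin_two_of]⟩

/-! Modulo `N` the matrices `L ^ c` and `R ^ d` become `[[1,0],[c,1]]` and `[[1,d],[0,1]]`, which
commute as soon as `c * d ≡ 0`; this holds for `N = e * m` because `e ∣ c` and `m ∣ d`. -/

lemma coe_L : ((L : SL2Z) : Matrix (Fin 2) (Fin 2) ℤ) = !![1, 0; 1, 1] := rfl

lemma coe_L_inv : ((L⁻¹ : SL2Z) : Matrix (Fin 2) (Fin 2) ℤ) = !![1, 0; -1, 1] := by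
  simp [coe_L, adjugate_fin_two]

lemma coe_L_zpow (n : ℤ) : ((L ^ n : SL2Z) : Matrix (Fin 2) (Fin 2) ℤ) = !![1, 0; n, 1] := by
  induction n with
  | zero => rw [zpow_zero, Matrix.SpecialLinearGroup.coe_one, Matrix.one_fin_two]
  | succ n h =>
    rw [_root_.zpow_add_one, Matrix.SpecialLinearGroup.coe_mul, h, coe_L, Matrix.mul_fin_two]
    congrm !![_, _; ?_, _]
    ring
  | pred n h =>
    rw [_root_.zpow_sub_one, Matrix.SpecialLinearGroup.coe_mul, h, coe_L_inv, Matrix.mul_fin_two]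
    congrm !![?_, ?_; ?_, ?_] <;> ring

lemma R_eq_T : R = ModularGroup.T := rfl

lemma commute_lowerUnitriangular_upperUnitriangular {A : Type*} [CommSemiring A] {x y : A}
    (h : x * y = 0) : Commute !![1, 0; x, 1] !![1, y; 0, 1] := by
  rw [Commute, SemiconjBy, Matrix.mul_fin_two, Matrix.mul_fin_two]
  congrm !![?_, ?_; ?_, ?_] <;> simp [h, mul_comm y x]

lemma commutator_L_zpow_R_zpow_mem_Gamma {N : ℕ} {c d : ℤ} (h : (N : ℤ) ∣ c * d) :
    (L ^ c)⁻¹ * (R ^ d)⁻¹ * L ^ c * R ^ d ∈ Gamma N := by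
  rw [Gamma_mem']
  set π := Matrix.SpecialLinearGroup.map (n := Fin 2) (Int.castRingHom (ZMod N))
  have hcd : (c : ZMod N) * d = 0 := by
    exact_mod_cast (ZMod.intCast_zmod_eq_zero_iff_dvd _ N).2 h
  have hL : (π (L ^ c) : Matrix (Fin 2) (Fin 2) (ZMod N)) = !![1, 0; (c : ZMod N), 1] := by
    rw [Matrix.SpecialLinearGroup.map_apply_coe, coe_L_zpow]
    ext i j; fin_cases i <;> fin_cases j <;> simp
  have hR : (π (R ^ d) : Matrix (Fin 2) (Fin 2) (ZMod N)) = !![1, (d : ZMod N); 0, 1] := by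
    rw [Matrix.SpecialLinearGroup.map_apply_coe, R_eq_T, ModularGroup.coe_T_zpow]
    ext i j; fin_cases i <;> fin_cases j <;> simp
  have hcomm : Commute (π (L ^ c)) (π (R ^ d)) := Subtype.ext <| by
    rw [Matrix.SpecialLinearGroup.coe_mul, Matrix.SpecialLinearGroup.coe_mul, hL, hR]
    exact (commute_lowerUnitriangular_upperUnitriangular hcd).eq
  rw [map_mul, map_mul, map_mul, map_inv, map_inv, mul_assoc, hcomm.eq, mul_assoc,
    inv_mul_cancel_left, inv_mul_cancel]

theorem stmt_4_general (f : ℕ) (m : ℕ)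
    (c d : ℤ) (hc0 : c ≡ 0 [ZMOD ((2 : ℤ) ^ f)])
    (hd0 : d ≡ 0 [ZMOD (m : ℤ)])
    (a r : SL2Z) (ha : a = L ^ c) (hr : r = R ^ d) :
    a⁻¹ * r⁻¹ * a * r ∈ Gamma (2 ^ f * m) := by
  subst ha hr
  apply commutator_L_zpow_R_zpow_mem_Gamma
  push_cast
  exact mul_dvd_mul (Int.modEq_zero_iff_dvd.1 hc0) (Int.modEq_zero_iff_dvd.1 hd0)

theorem stmt_4 (f : ℕ) (hf : 1 ≤ f) (m : ℕ) (hmodd : Odd m) (hm1 : 1 < m)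
    (c d : ℤ) (hc0 : c ≡ 0 [ZMOD ((2 : ℤ) ^ f)]) (hc1 : c ≡ 1 [ZMOD (m : ℤ)])
    (hd1 : d ≡ 1 [ZMOD ((2 : ℤ) ^ f)]) (hd0 : d ≡ 0 [ZMOD (m : ℤ)])
    (a r : SL2Z) (ha : a = L ^ c) (hr : r = R ^ d) :
    a⁻¹ * r⁻¹ * a * r ∈ Gamma (2 ^ f * m) :=
  stmt_4_general f m c d hc0 hd0 a r ha hr
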